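/- Suppose p is generic for G, some node label B_{ii} with 1 ≤ i ≤ n−2 is a nonzero square mod p, the subspaces V_0, V_{n−1} and V_{0,n−1} are all nonsingular, and G_0^p = O(V_0) and G_{n−1}^p = O(V_{n−1}). Then G_0^p ∩ G_{n−1}^p = O(V_{0,n−1}). -/

import Mathlib

/- Setup: reduction mod an odd prime `p` of a crystallographic Coxeter group
`G = ⟨r₀, …, r_{n−1}⟩` with string diagram and Gram matrix `B`. -/

namespace Statement3

variable (n p : ℕ)

/-- `V = (ZMod p)^n`. -/
abbrev V := Fin n → ZMod p

/-- The general linear group of `V`. -/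
abbrev GLV := (Module.End (ZMod p) (V n p))ˣ

/-- Reduction of a rational number mod `p` (meaningful when the denominator is prime to `p`). -/
def redQ (q : ℚ) : ZMod p := (q.num : ZMod p) * ((q.den : ZMod p))⁻¹

/-- The standard basis vector `b_i`. -/
def basisVec (i : Fin n) : V n p := Pi.single i 1

/-- The symmetric bilinear form on `V` obtained by reducing the Gram matrix `B` mod `p`. -/
def form (B : Matrix (Fin n) (Fin n) ℚ) (x y : V n p) : ZMod p :=
  ∑ i, ∑ j, x i * redQ p (B i j) * y j

/-- `B` is the Gram matrix of a basic system for a crystallographic Coxeter group with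
string diagram: symmetric, tridiagonal, positive integer node labels, integer Cartan
entries, and branch condition `4 B_{i-1,i}² = c ⬝ B_{i-1,i-1} ⬝ B_{ii}` with `c ∈ {1,2,3,4}`
(or `B_{i-1,i} = 0`, i.e. an absent branch). -/
def GramOK (B : Matrix (Fin n) (Fin n) ℚ) : Prop :=
  (∀ i j, B i j = B j i) ∧
  (∀ i j : Fin n, 1 < |(i : ℤ) - (j : ℤ)| → B i j = 0) ∧
  (∀ i, ∃ m : ℕ, 0 < m ∧ B i i = m) ∧
  (∀ i j, ∃ c : ℤ, 2 * B i j / B i i = (c : ℚ)) ∧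
  (∀ i : Fin n, ∀ h : (i : ℕ) + 1 < n,
    B i ⟨(i : ℕ) + 1, h⟩ = 0 ∨
      ∃ c : ℕ, 1 ≤ c ∧ c ≤ 4 ∧
        4 * (B i ⟨(i : ℕ) + 1, h⟩) ^ 2 = c * B i i * B ⟨(i : ℕ) + 1, h⟩ ⟨(i : ℕ) + 1, h⟩)

/-- All entries of `B` are `p`-integral. -/
def PIntegral (B : Matrix (Fin n) (Fin n) ℚ) : Prop :=
  ∀ i j, ¬ (p ∣ (B i j).den)

/-- `p` is generic for `G`: either `p ≥ 5`, or `p = 3` and no branch is labelled `6`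
(a branch `{i, i+1}` is labelled `6` exactly when `4 B_{i,i+1}² = 3 ⬝ B_{ii} ⬝ B_{i+1,i+1}`). -/
def Generic (B : Matrix (Fin n) (Fin n) ℚ) : Prop :=
  5 ≤ p ∨ (p = 3 ∧ ∀ i : Fin n, ∀ h : (i : ℕ) + 1 < n,
    4 * (B i ⟨(i : ℕ) + 1, h⟩) ^ 2 ≠ 3 * B i i * B ⟨(i : ℕ) + 1, h⟩ ⟨(i : ℕ) + 1, h⟩)

/-- `r i` is the reduction mod `p` of the generating reflection `r_i`, determined by its
action on the standard basis: `r_i(b_j) = b_j − C_{ij} b_i` with `C_{ij} = 2 B_{ij}/B_{ii}`. -/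
def ReflHyp (B : Matrix (Fin n) (Fin n) ℚ) (r : Fin n → GLV n p) : Prop :=
  ∀ i j : Fin n, (r i).1 (basisVec n p j) =
    basisVec n p j - redQ p (2 * B i j / B i i) • basisVec n p i

/-- The intersection property (string C-group condition) for the subgroups generated by
the reflections `r i`, `i ∈ S`. -/
def IsStringC (r : Fin n → GLV n p) (S : Set (Fin n)) : Prop :=
  ∀ I J : Set (Fin n), I ⊆ S → J ⊆ S →
    Subgroup.closure (r '' I) ⊓ Subgroup.closure (r '' J) = Subgroup.closure (r '' (I ∩ J))

/-- The span of the basis vectors `b_i`, `i ∈ S`. -/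
def spanV (S : Set (Fin n)) : Submodule (ZMod p) (V n p) :=
  Submodule.span (ZMod p) (basisVec n p '' S)

/-- The subspace `W` is nonsingular: the restriction of the form to `W` is nondegenerate. -/
def Nonsing (B : Matrix (Fin n) (Fin n) ℚ) (W : Submodule (ZMod p) (V n p)) : Prop :=
  ∀ x ∈ W, (∀ y ∈ W, form n p B x y = 0) → x = 0

/-- The full orthogonal group `O(V)` of the form, as a subgroup of `GL(V)`. -/
def OV (B : Matrix (Fin n) (Fin n) ℚ) : Subgroup (GLV n p) where
  carrier := {g | ∀ x y, form n p B (g.1 x) (g.1 y) = form n p B x y}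
  one_mem' := by intro x y; simp
  mul_mem' := by
    intro a b ha hb x y
    simpa [Units.val_mul] using (ha (b.1 x) (b.1 y)).trans (hb x y)
  inv_mem' := by
    intro a ha x y
    have key : ∀ z, a.1 ((a⁻¹ : GLV n p).1 z) = z := by
      intro z
      rw [← Module.End.mul_apply, ← Units.val_mul, mul_inv_cancel, Units.val_one,
        Module.End.one_apply]
    have h := ha ((a⁻¹ : GLV n p).1 x) ((a⁻¹ : GLV n p).1 y)
    rw [key, key] at h
    exact h.symm

/-- `g` fixes `W^⊥` pointwise. -/
def perpFix (B : Matrix (Fin n) (Fin n) ℚ) (W : Submodule (ZMod p) (V n p))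
    (g : GLV n p) : Prop :=
  ∀ u : V n p, (∀ w ∈ W, form n p B u w = 0) → g.1 u = u

/-- `O(W)` identified with the subgroup `{g ∈ O(V) : g(W) = W, g fixes W^⊥ pointwise}`
of `O(V)`. -/
def OSub (B : Matrix (Fin n) (Fin n) ℚ) (W : Submodule (ZMod p) (V n p)) :
    Subgroup (GLV n p) where
  carrier := {g | g ∈ OV n p B ∧ Submodule.map g.1 W = W ∧ perpFix n p B W g}
  one_mem' := by
    refine ⟨(OV n p B).one_mem, ?_, fun u _ => by simp⟩
    simp [Module.End.one_eq_id]
  mul_mem' := by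
    rintro a b ⟨ha1, ha2, ha3⟩ ⟨hb1, hb2, hb3⟩
    refine ⟨mul_mem ha1 hb1, ?_, ?_⟩
    · rw [Units.val_mul, Module.End.mul_eq_comp, Submodule.map_comp, hb2, ha2]
    · intro u hu
      rw [Units.val_mul, Module.End.mul_apply, hb3 u hu, ha3 u hu]
  inv_mem' := by
    rintro a ⟨ha1, ha2, ha3⟩
    have key : ∀ z, (a⁻¹ : GLV n p).1 (a.1 z) = z := fun z => by
      rw [← Module.End.mul_apply, ← Units.val_mul, inv_mul_cancel, Units.val_one,
        Module.End.one_apply]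
    refine ⟨(OV n p B).inv_mem ha1, ?_, ?_⟩
    · conv_lhs => rw [← ha2]
      rw [← Submodule.map_comp, ← Module.End.mul_eq_comp, ← Units.val_mul, inv_mul_cancel,
        Units.val_one, Module.End.one_eq_id]
      simp
    · intro u hu
      conv_lhs => rw [← ha3 u hu]
      exact key u

/-- `g` is the reflection `r_a` with root `a ∈ W`, where `a·a` is a nonzero square. -/
def IsSqRefl (B : Matrix (Fin n) (Fin n) ℚ) (W : Submodule (ZMod p) (V n p))
    (g : GLV n p) : Prop :=
  ∃ a ∈ W, (∃ t : ZMod p, t ≠ 0 ∧ form n p B a a = t ^ 2) ∧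
    ∀ x, g.1 x = x - (2 * form n p B x a * (form n p B a a)⁻¹) • a

/-- `g` is the reflection `r_a` with root `a ∈ W`, where `a·a` is a nonsquare. -/
def IsNonsqRefl (B : Matrix (Fin n) (Fin n) ℚ) (W : Submodule (ZMod p) (V n p))
    (g : GLV n p) : Prop :=
  ∃ a ∈ W, (∀ t : ZMod p, form n p B a a ≠ t ^ 2) ∧
    ∀ x, g.1 x = x - (2 * form n p B x a * (form n p B a a)⁻¹) • a

/-- `O₁(W)` (resp. `Ô₁(W)` when `W` is singular): the subgroup generated by all
reflections `r_a` with root `a ∈ W` of square norm. -/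
def O1 (B : Matrix (Fin n) (Fin n) ℚ) (W : Submodule (ZMod p) (V n p)) :
    Subgroup (GLV n p) :=
  Subgroup.closure {g | IsSqRefl n p B W g}

/-- `O₂(W)`: the subgroup generated by all reflections `r_a` with root `a ∈ W`
of nonsquare norm. -/
def O2 (B : Matrix (Fin n) (Fin n) ℚ) (W : Submodule (ZMod p) (V n p)) :
    Subgroup (GLV n p) :=
  Subgroup.closure {g | IsNonsqRefl n p B W g}

/-- `H` is of orthogonal type on the (nonsingular) subspace `W`. -/
def OrthType (B : Matrix (Fin n) (Fin n) ℚ) (W : Submodule (ZMod p) (V n p))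
    (H : Subgroup (GLV n p)) : Prop :=
  H = OSub n p B W ∨ H = O1 n p B W ∨ H = O2 n p B W

/-!
The statement is pure orthogonal geometry: for nonsingular subspaces `W₀`, `W₁` and `W₀ ∩ W₁`
one has `O(W₀) ∩ O(W₁) = O(W₀ ∩ W₁)`. An element `g` of `O(W)` with `W` nonsingular moves every
vector only inside `W`, since `V = W ⊕ W^⊥` and `g` fixes `W^⊥`; this gives `⊇`. Conversely, an
isometry `g ∈ O(W₀) ∩ O(W₁)` stabilises `W₀ ∩ W₁`, and for `v ⊥ W₀ ∩ W₁` the vector `g v - v`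
lies in `W₀ ∩ W₁` and is orthogonal to it, so it vanishes.
-/

lemma _root_.Subgroup.map_eq_of_forall_map_le {R M : Type*} [Semiring R] [AddCommMonoid M]
    [Module R M] {H : Subgroup (Module.End R M)ˣ} {W : Submodule R M}
    (hH : ∀ h ∈ H, W.map h.1 ≤ W) {g : (Module.End R M)ˣ} (hg : g ∈ H) : W.map g.1 = W := by
  refine le_antisymm (hH g hg) fun w hw => ⟨g⁻¹.1 w, hH g⁻¹ (H.inv_mem hg) ⟨w, hw, rfl⟩, ?_⟩
  change (g * g⁻¹).1 w = w
  simp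

section Orthogonal

variable {n p : ℕ} {B : Matrix (Fin n) (Fin n) ℚ}

lemma form_comm (hB : B.IsSymm) (x y : V n p) : form n p B x y = form n p B y x := by
  unfold form
  rw [Finset.sum_comm]
  exact Finset.sum_congr rfl fun i _ => Finset.sum_congr rfl fun j _ => by
    rw [hB.apply j i]; ring

variable (n p) in
noncomputable def formBilin (B : Matrix (Fin n) (Fin n) ℚ) : LinearMap.BilinForm (ZMod p) (V n p) :=
  Matrix.toBilin' fun i j => redQ p (B i j)

lemma formBilin_apply (x y : V n p) : formBilin n p B x y = form n p B x y :=
  Matrix.toBilin'_apply _ _ _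

lemma form_sub_left (x x' y : V n p) :
    form n p B (x - x') y = form n p B x y - form n p B x' y := by
  simp only [← formBilin_apply, map_sub, LinearMap.sub_apply]

lemma mem_spanV_iff {S : Set (Fin n)} {x : V n p} : x ∈ spanV n p S ↔ ∀ i ∉ S, x i = 0 := by
  have hb : basisVec n p = Pi.basisFun (ZMod p) (Fin n) := funext fun i => by
    rw [Pi.basisFun_apply]; rfl
  rw [spanV, hb, Module.Basis.mem_span_image]
  refine ⟨fun h i hi => by_contra fun hx => hi (h ?_), fun h i hi => by_contra fun hiS => ?_⟩
  · simpa [Pi.basisFun_repr] using hx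
  · simp [Pi.basisFun_repr, h i hiS] at hi

lemma spanV_inter (S T : Set (Fin n)) : spanV n p (S ∩ T) = spanV n p S ⊓ spanV n p T := by
  ext x
  simp only [Submodule.mem_inf, mem_spanV_iff, Set.mem_inter_iff, not_and_or]
  exact ⟨fun h => ⟨fun i hi => h i (.inl hi), fun i hi => h i (.inr hi)⟩,
    fun ⟨hS, hT⟩ i => Or.rec (hS i) (hT i)⟩

variable [Fact p.Prime]

lemma exists_add_perp_of_nonsing (hB : B.IsSymm) {W : Submodule (ZMod p) (V n p)}
    (hW : Nonsing n p B W) (v : V n p) :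
    ∃ w ∈ W, ∃ u, (∀ y ∈ W, form n p B u y = 0) ∧ v = w + u := by
  have hrefl : (formBilin n p B).IsRefl := fun x y h => by
    rw [formBilin_apply, form_comm hB, ← formBilin_apply, h]
  have hdisj : Disjoint W ((formBilin n p B).orthogonal W) := Submodule.disjoint_def.2
    fun x hx hx' => hW x hx fun y hy => by rw [form_comm hB, ← formBilin_apply]; exact hx' y hy
  have hcompl := ((formBilin n p B).restrict_nondegenerate_iff_isCompl_orthogonal hrefl).1
    ((formBilin n p B).nondegenerate_restrict_of_disjoint_orthogonal hrefl hdisj)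
  obtain ⟨w, hw, u, hu, rfl⟩ := Submodule.mem_sup.1 (hcompl.sup_eq_top ▸ Submodule.mem_top :
    v ∈ W ⊔ (formBilin n p B).orthogonal W)
  exact ⟨w, hw, u, fun y hy => by rw [form_comm hB, ← formBilin_apply]; exact hu y hy, rfl⟩

lemma sub_mem_of_mem_OSub (hB : B.IsSymm) {W : Submodule (ZMod p) (V n p)}
    (hW : Nonsing n p B W) {g : GLV n p} (hg : g ∈ OSub n p B W) (v : V n p) :
    g.1 v - v ∈ W := by
  obtain ⟨-, hmap, hfix⟩ := hg
  obtain ⟨w, hw, u, hu, rfl⟩ := exists_add_perp_of_nonsing hB hW v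
  have hgw : g.1 w ∈ W := hmap ▸ Submodule.mem_map_of_mem hw
  rw [map_add, hfix u hu, add_sub_add_right_eq_sub]
  exact W.sub_mem hgw hw

lemma perp_apply_of_map_eq {W : Submodule (ZMod p) (V n p)} {g : GLV n p}
    (hg : g ∈ OV n p B) (hmap : W.map g.1 = W) {u : V n p}
    (hu : ∀ y ∈ W, form n p B u y = 0) : ∀ y ∈ W, form n p B (g.1 u) y = 0 := by
  intro y hy
  obtain ⟨w, hw, rfl⟩ := hmap.symm ▸ hy
  rw [hg u w, hu w hw]

lemma OSub_mono (hB : B.IsSymm) {W W' : Submodule (ZMod p) (V n p)} (hW : Nonsing n p B W)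
    (hle : W ≤ W') : OSub n p B W ≤ OSub n p B W' := by
  have hmap_le : ∀ h ∈ OSub n p B W, W'.map h.1 ≤ W' := by
    rintro h hh _ ⟨v, hv, rfl⟩
    simpa using W'.add_mem hv (hle (sub_mem_of_mem_OSub hB hW hh v))
  intro g hg
  exact ⟨hg.1, Subgroup.map_eq_of_forall_map_le hmap_le hg,
    fun u hu => hg.2.2 u fun w hw => hu w (hle hw)⟩

lemma OSub_inf_le (hB : B.IsSymm) {W₀ W₁ : Submodule (ZMod p) (V n p)}
    (h₀ : Nonsing n p B W₀) (h₁ : Nonsing n p B W₁) (h : Nonsing n p B (W₀ ⊓ W₁)) :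
    OSub n p B W₀ ⊓ OSub n p B W₁ ≤ OSub n p B (W₀ ⊓ W₁) := by
  have hmap_le : ∀ g ∈ OSub n p B W₀ ⊓ OSub n p B W₁, (W₀ ⊓ W₁).map g.1 ≤ W₀ ⊓ W₁ :=
    fun g hg => (Submodule.map_inf_le _).trans_eq (by rw [hg.1.2.1, hg.2.2.1])
  intro g hg
  have hmap := Subgroup.map_eq_of_forall_map_le hmap_le hg
  refine ⟨hg.1.1, hmap, fun v hv => ?_⟩
  have hmem : g.1 v - v ∈ W₀ ⊓ W₁ :=
    ⟨sub_mem_of_mem_OSub hB h₀ hg.1 v, sub_mem_of_mem_OSub hB h₁ hg.2 v⟩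
  have hperp : ∀ y ∈ W₀ ⊓ W₁, form n p B (g.1 v - v) y = 0 := fun y hy => by
    rw [form_sub_left, perp_apply_of_map_eq hg.1.1 hmap hv y hy, hv y hy, sub_zero]
  exact sub_eq_zero.1 (h _ hmem hperp)

lemma OSub_inf_eq (hB : B.IsSymm) {W₀ W₁ : Submodule (ZMod p) (V n p)}
    (h₀ : Nonsing n p B W₀) (h₁ : Nonsing n p B W₁) (h : Nonsing n p B (W₀ ⊓ W₁)) :
    OSub n p B W₀ ⊓ OSub n p B W₁ = OSub n p B (W₀ ⊓ W₁) :=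
  le_antisymm (OSub_inf_le hB h₀ h₁ h)
    (le_inf (OSub_mono hB h inf_le_left) (OSub_mono hB h inf_le_right))

end Orthogonal

theorem statement3_general
    (n p : ℕ) (hp : p.Prime)
    (B : Matrix (Fin n) (Fin n) ℚ)
    (hB : GramOK n B)
    (r : Fin n → GLV n p)
    (hV0 : Nonsing n p B (spanV n p {i : Fin n | (i : ℕ) ≠ 0}))
    (hVn1 : Nonsing n p B (spanV n p {i : Fin n | (i : ℕ) ≠ n - 1}))
    (hV0n1 : Nonsing n p B (spanV n p {i : Fin n | (i : ℕ) ≠ 0 ∧ (i : ℕ) ≠ n - 1}))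
    (h0 : Subgroup.closure (r '' {i : Fin n | (i : ℕ) ≠ 0}) = OSub n p B (spanV n p {i : Fin n | (i : ℕ) ≠ 0}))
    (hn1 : Subgroup.closure (r '' {i : Fin n | (i : ℕ) ≠ n - 1}) = OSub n p B (spanV n p {i : Fin n | (i : ℕ) ≠ n - 1})) :
    Subgroup.closure (r '' {i : Fin n | (i : ℕ) ≠ 0}) ⊓ Subgroup.closure (r '' {i : Fin n | (i : ℕ) ≠ n - 1}) =
      OSub n p B (spanV n p {i : Fin n | (i : ℕ) ≠ 0 ∧ (i : ℕ) ≠ n - 1}) := by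
  have : Fact p.Prime := ⟨hp⟩
  have hsymm : B.IsSymm := Matrix.IsSymm.ext fun i j => hB.1 j i
  rw [Set.ofPred_and, spanV_inter] at hV0n1 ⊢
  rw [h0, hn1, OSub_inf_eq hsymm hV0 hVn1 hV0n1]

/-- in the fully nonsingular case with `G₀ᵖ = O(V₀)` and
`G_{n-1}ᵖ = O(V_{n-1})`, one has `G₀ᵖ ∩ G_{n-1}ᵖ = O(V_{0,n-1})`. -/
theorem statement3
    (n p : ℕ) (hn : 3 ≤ n) (hp : p.Prime) (hodd : p ≠ 2)
    (B : Matrix (Fin n) (Fin n) ℚ)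
    (hB : GramOK n B) (hint : PIntegral n p B)
    (r : Fin n → GLV n p) (hr : ReflHyp n p B r)
    (hgen : Generic n p B)
    (hsq : ∃ i : Fin n, 1 ≤ (i : ℕ) ∧ (i : ℕ) ≤ n - 2 ∧
      ∃ t : ZMod p, t ≠ 0 ∧ redQ p (B i i) = t ^ 2)
    (hV0 : Nonsing n p B (spanV n p {i : Fin n | (i : ℕ) ≠ 0}))
    (hVn1 : Nonsing n p B (spanV n p {i : Fin n | (i : ℕ) ≠ n - 1}))
    (hV0n1 : Nonsing n p B (spanV n p {i : Fin n | (i : ℕ) ≠ 0 ∧ (i : ℕ) ≠ n - 1}))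
    (h0 : Subgroup.closure (r '' {i : Fin n | (i : ℕ) ≠ 0}) = OSub n p B (spanV n p {i : Fin n | (i : ℕ) ≠ 0}))
    (hn1 : Subgroup.closure (r '' {i : Fin n | (i : ℕ) ≠ n - 1}) = OSub n p B (spanV n p {i : Fin n | (i : ℕ) ≠ n - 1})) :
    Subgroup.closure (r '' {i : Fin n | (i : ℕ) ≠ 0}) ⊓ Subgroup.closure (r '' {i : Fin n | (i : ℕ) ≠ n - 1}) =
      OSub n p B (spanV n p {i : Fin n | (i : ℕ) ≠ 0 ∧ (i : ℕ) ≠ n - 1}) :=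
  statement3_general n p hp B hB r hV0 hVn1 hV0n1 h0 hn1

end Statement3
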